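/- The largest eigenvalue of the normalized Laplacian is a nonincreasing function of the self-loop weight β: if 0 < β₁ ≤ β₂, then λ_max(Λ(β₂)) ≤ λ_max(Λ(β₁)), where Λ(β) denotes the normalized Laplacian built with self-loop weight β (the points x_1, …, x_n and the exponent α being held fixed). -/

import Mathlib

/-! Put `v = D^{1/2} u`. Then `vᵀ Λ v = uᵀ (D - Ω) u = ∑ᵢⱼ ωᵢⱼ uᵢ (uᵢ - uⱼ)` and `vᵀ v = uᵀ D u`.
The numerator does not see the diagonal of `Ω`, hence not `β`, and it is nonnegative, while `D`
grows with `β`. So for a top eigenvector `v = D(β₂)^{1/2} u` of `Λ(β₂)`, the Rayleigh quotient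
of `Λ(β₁)` at `D(β₁)^{1/2} u` is at least `λ_max(Λ(β₂))`, and it is at most `λ_max(Λ(β₁))`. -/

open Matrix Finset

namespace Matrix.IsHermitian

variable {ι : Type*} [Fintype ι] [DecidableEq ι] {A : Matrix ι ι ℝ}

theorem dotProduct_mulVec_le (hA : A.IsHermitian) {c : ℝ}
    (hc : ∀ μ (v : ι → ℝ), v ≠ 0 → A *ᵥ v = μ • v → μ ≤ c) (w : ι → ℝ) :
    w ⬝ᵥ A *ᵥ w ≤ c * (w ⬝ᵥ w) := by
  have hpsd : (algebraMap ℝ (Matrix ι ι ℝ) c - A).PosSemidef := by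
    refine posSemidef_iff_isHermitian_and_spectrum_nonneg.mpr ⟨?_, ?_⟩
    · exact (isHermitian_diagonal _).sub hA
    · rw [← spectrum.singleton_sub_eq]
      rintro _ ⟨_, rfl, μ, hμ, rfl⟩
      rw [← spectrum_toLin', ← Module.End.hasEigenvalue_iff_mem_spectrum] at hμ
      obtain ⟨v, hv⟩ := hμ.exists_hasEigenvector
      exact sub_nonneg.mpr (hc μ v hv.2 hv.apply_eq_smul)
  have := hpsd.dotProduct_mulVec_nonneg w
  rw [Algebra.algebraMap_eq_smul_one, sub_mulVec, smul_mulVec, one_mulVec, dotProduct_sub,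
    dotProduct_smul, star_trivial, smul_eq_mul] at this
  linarith

end Matrix.IsHermitian

section NormalizedLaplacian

variable {ι : Type*} [Fintype ι]

noncomputable def normalizedLaplacian [DecidableEq ι] (ω : ι → ι → ℝ) : Matrix ι ι ℝ :=
  1 - diagonal (fun i => (√(∑ p, ω i p))⁻¹) * of ω * diagonal (fun i => (√(∑ p, ω i p))⁻¹)

def laplacianForm (ω : ι → ι → ℝ) (u : ι → ℝ) : ℝ :=
  ∑ i, ∑ j, ω i j * u i * (u i - u j)

theorem laplacianForm_congr_offDiag {ω ω' : ι → ι → ℝ} (h : ∀ i j, i ≠ j → ω i j = ω' i j)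
    (u : ι → ℝ) : laplacianForm ω u = laplacianForm ω' u := by
  refine sum_congr rfl fun i _ => sum_congr rfl fun j _ => ?_
  rcases eq_or_ne i j with rfl | hij
  · simp
  · rw [h i j hij]

theorem two_mul_laplacianForm {ω : ι → ι → ℝ} (hsymm : ∀ i j, ω i j = ω j i) (u : ι → ℝ) :
    2 * laplacianForm ω u = ∑ i, ∑ j, ω i j * (u i - u j) ^ 2 := by
  have hswap : laplacianForm ω u = ∑ i, ∑ j, ω i j * u j * (u j - u i) := by
    rw [laplacianForm, sum_comm]
    simp only [hsymm]
  rw [two_mul]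
  nth_rewrite 2 [hswap]
  rw [laplacianForm, ← sum_add_distrib]
  refine sum_congr rfl fun i _ => ?_
  rw [← sum_add_distrib]
  exact sum_congr rfl fun j _ => by ring

theorem laplacianForm_nonneg {ω : ι → ι → ℝ} (hsymm : ∀ i j, ω i j = ω j i)
    (hnonneg : ∀ i j, 0 ≤ ω i j) (u : ι → ℝ) : 0 ≤ laplacianForm ω u := by
  have h := two_mul_laplacianForm hsymm u
  have : 0 ≤ ∑ i, ∑ j, ω i j * (u i - u j) ^ 2 :=
    sum_nonneg fun i _ => sum_nonneg fun j _ => mul_nonneg (hnonneg i j) (sq_nonneg _)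
  linarith

theorem dotProduct_sqrt_degree_mul_self {ω : ι → ι → ℝ} (hdeg : ∀ i, 0 ≤ ∑ p, ω i p)
    (u : ι → ℝ) :
    (fun i => √(∑ p, ω i p) * u i) ⬝ᵥ (fun i => √(∑ p, ω i p) * u i)
      = ∑ i, (∑ p, ω i p) * u i ^ 2 := by
  refine sum_congr rfl fun i _ => ?_
  rw [← Real.mul_self_sqrt (hdeg i)]
  ring

variable [DecidableEq ι]

theorem normalizedLaplacian_isHermitian {ω : ι → ι → ℝ} (hsymm : ∀ i j, ω i j = ω j i) :
    (normalizedLaplacian ω).IsHermitian := by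
  have : (of ω)ᵀ = of ω := ext fun i j => hsymm j i
  rw [IsHermitian, conjTranspose_eq_transpose_of_trivial, normalizedLaplacian]
  simp only [transpose_sub, transpose_one, transpose_mul, diagonal_transpose, this, mul_assoc]

theorem dotProduct_normalizedLaplacian_mulVec {ω : ι → ι → ℝ} (hdeg : ∀ i, 0 < ∑ p, ω i p)
    (u : ι → ℝ) :
    (fun i => √(∑ p, ω i p) * u i) ⬝ᵥ normalizedLaplacian ω *ᵥ (fun i => √(∑ p, ω i p) * u i)
      = laplacianForm ω u := by
  set v : ι → ℝ := fun i => √(∑ p, ω i p) * u i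
  have hv : diagonal (fun i => (√(∑ p, ω i p))⁻¹) *ᵥ v = u := by
    ext i
    rw [mulVec_diagonal, inv_mul_cancel_left₀ (Real.sqrt_pos.mpr (hdeg i)).ne']
  rw [normalizedLaplacian, sub_mulVec, one_mulVec, ← mulVec_mulVec, ← mulVec_mulVec, hv,
    dotProduct_sub, dotProduct_mulVec, ← mulVec_transpose, diagonal_transpose, hv,
    dotProduct_sqrt_degree_mul_self fun i => (hdeg i).le]
  simp only [laplacianForm, dotProduct, mulVec, of_apply, sum_mul, mul_sum, ← sum_sub_distrib]
  exact sum_congr rfl fun i _ => sum_congr rfl fun j _ => by ring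

theorem eigenvalue_mul_sum_degree_eq_laplacianForm {ω : ι → ι → ℝ}
    (hdeg : ∀ i, 0 < ∑ p, ω i p) {μ : ℝ} {v : ι → ℝ} (hμ : normalizedLaplacian ω *ᵥ v = μ • v) :
    μ * ∑ i, (∑ p, ω i p) * (v i / √(∑ p, ω i p)) ^ 2
      = laplacianForm ω (fun i => v i / √(∑ p, ω i p)) := by
  have hv : v = fun i => √(∑ p, ω i p) * (v i / √(∑ p, ω i p)) :=
    funext fun i => (mul_div_cancel₀ _ (Real.sqrt_pos.mpr (hdeg i)).ne').symm
  rw [← dotProduct_normalizedLaplacian_mulVec hdeg, ← hv, hμ, dotProduct_smul, smul_eq_mul,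
    ← dotProduct_sqrt_degree_mul_self fun i => (hdeg i).le, ← hv]

theorem laplacianForm_le_mul_sum_degree {ω : ι → ι → ℝ} (hsymm : ∀ i j, ω i j = ω j i)
    (hdeg : ∀ i, 0 < ∑ p, ω i p) {c : ℝ}
    (hc : ∀ μ (v : ι → ℝ), v ≠ 0 → normalizedLaplacian ω *ᵥ v = μ • v → μ ≤ c) (u : ι → ℝ) :
    laplacianForm ω u ≤ c * ∑ i, (∑ p, ω i p) * u i ^ 2 := by
  have := (normalizedLaplacian_isHermitian hsymm).dotProduct_mulVec_le hc
    (fun i => √(∑ p, ω i p) * u i)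
  rwa [dotProduct_normalizedLaplacian_mulVec hdeg,
    dotProduct_sqrt_degree_mul_self fun i => (hdeg i).le] at this

theorem eigenvalue_normalizedLaplacian_le_of_diag_le {ω₁ ω₂ : ι → ι → ℝ}
    (hsymm : ∀ i j, ω₁ i j = ω₁ j i) (hnonneg : ∀ i j, 0 ≤ ω₁ i j)
    (hdeg : ∀ i, 0 < ∑ p, ω₁ i p) (hoff : ∀ i j, i ≠ j → ω₁ i j = ω₂ i j)
    (hdiag : ∀ i, ω₁ i i ≤ ω₂ i i) {c : ℝ}
    (hc : ∀ μ (v : ι → ℝ), v ≠ 0 → normalizedLaplacian ω₁ *ᵥ v = μ • v → μ ≤ c)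
    {μ : ℝ} {v : ι → ℝ} (hv : v ≠ 0) (hμ : normalizedLaplacian ω₂ *ᵥ v = μ • v) : μ ≤ c := by
  have hdeg_le : ∀ i, ∑ p, ω₁ i p ≤ ∑ p, ω₂ i p := fun i => sum_le_sum fun j _ => by
    rcases eq_or_ne i j with rfl | hij
    exacts [hdiag i, (hoff i j hij).le]
  have hdeg₂ : ∀ i, 0 < ∑ p, ω₂ i p := fun i => (hdeg i).trans_le (hdeg_le i)
  set u : ι → ℝ := fun i => v i / √(∑ p, ω₂ i p)
  set S₁ := ∑ i, (∑ p, ω₁ i p) * u i ^ 2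
  set S₂ := ∑ i, (∑ p, ω₂ i p) * u i ^ 2
  have hS₁ : 0 < S₁ := by
    obtain ⟨i, hi⟩ := Function.ne_iff.mp hv
    have hui : u i ≠ 0 := div_ne_zero hi (Real.sqrt_pos.mpr (hdeg₂ i)).ne'
    exact sum_pos' (fun j _ => mul_nonneg (hdeg j).le (sq_nonneg _))
      ⟨i, mem_univ i, mul_pos (hdeg i) (sq_pos_of_ne_zero hui)⟩
  have hS₁₂ : S₁ ≤ S₂ :=
    sum_le_sum fun i _ => mul_le_mul_of_nonneg_right (hdeg_le i) (sq_nonneg _)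
  have hray := laplacianForm_le_mul_sum_degree hsymm hdeg hc u
  have hc₀ : 0 ≤ c :=
    nonneg_of_mul_nonneg_left ((laplacianForm_nonneg hsymm hnonneg u).trans hray) hS₁
  refine le_of_mul_le_mul_right ?_ (hS₁.trans_le hS₁₂)
  calc μ * S₂ = laplacianForm ω₂ u := eigenvalue_mul_sum_degree_eq_laplacianForm hdeg₂ hμ
    _ = laplacianForm ω₁ u := (laplacianForm_congr_offDiag hoff u).symm
    _ ≤ c * S₁ := hray
    _ ≤ c * S₂ := mul_le_mul_of_nonneg_left hS₁₂ hc₀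

end NormalizedLaplacian

theorem normalized_laplacian_top_eigenvalue_antitone_in_beta_general
    {n : ℕ}
    (x : Fin n → EuclideanSpace ℝ (Fin 2))
    (α : ℝ)
    (β₁ β₂ : ℝ) (hβ₁ : 0 < β₁) (hβ₁₂ : β₁ ≤ β₂)
    (ω₁ ω₂ : Fin n → Fin n → ℝ)
    (hω₁ : ∀ i j, i ≠ j → ω₁ i j = ‖x i - x j‖ ^ α)
    (hω₁diag : ∀ i, ω₁ i i = β₁)
    (hω₂ : ∀ i j, i ≠ j → ω₂ i j = ‖x i - x j‖ ^ α)
    (hω₂diag : ∀ i, ω₂ i i = β₂)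
    (d₁ d₂ : Fin n → ℝ)
    (hd₁ : ∀ i, d₁ i = ∑ p, ω₁ i p) (hd₂ : ∀ i, d₂ i = ∑ p, ω₂ i p)
    (Λ₁ Λ₂ : Matrix (Fin n) (Fin n) ℝ)
    (hΛ₁ : Λ₁ = 1 - (Matrix.diagonal fun i => (Real.sqrt (d₁ i))⁻¹) * (Matrix.of ω₁) *
        (Matrix.diagonal fun i => (Real.sqrt (d₁ i))⁻¹))
    (hΛ₂ : Λ₂ = 1 - (Matrix.diagonal fun i => (Real.sqrt (d₂ i))⁻¹) * (Matrix.of ω₂) *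
        (Matrix.diagonal fun i => (Real.sqrt (d₂ i))⁻¹))
    (lmax₁ lmax₂ : ℝ)
    (hlmax₁ : IsGreatest {σ : ℝ | ∃ v : Fin n → ℝ, v ≠ 0 ∧ Λ₁.mulVec v = σ • v} lmax₁)
    (hlmax₂ : IsGreatest {σ : ℝ | ∃ v : Fin n → ℝ, v ≠ 0 ∧ Λ₂.mulVec v = σ • v} lmax₂) :
    lmax₂ ≤ lmax₁ := by
  obtain rfl : d₁ = _ := funext hd₁
  obtain rfl : d₂ = _ := funext hd₂
  have hsymm : ∀ i j, ω₁ i j = ω₁ j i := fun i j => by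
    rcases eq_or_ne i j with rfl | hij
    · rfl
    · rw [hω₁ i j hij, hω₁ j i hij.symm, norm_sub_rev]
  have hnonneg : ∀ i j, 0 ≤ ω₁ i j := fun i j => by
    rcases eq_or_ne i j with rfl | hij
    · rw [hω₁diag]; exact hβ₁.le
    · rw [hω₁ i j hij]; positivity
  have hdeg : ∀ i, 0 < ∑ p, ω₁ i p := fun i =>
    (hω₁diag i ▸ hβ₁).trans_le (single_le_sum (fun j _ => hnonneg i j) (mem_univ i))
  have hoff : ∀ i j, i ≠ j → ω₁ i j = ω₂ i j := fun i j hij => by rw [hω₁ i j hij, hω₂ i j hij]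
  have hdiag : ∀ i, ω₁ i i ≤ ω₂ i i := fun i => by rw [hω₁diag, hω₂diag]; exact hβ₁₂
  obtain ⟨v, hv, hμ⟩ := hlmax₂.1
  subst hΛ₁ hΛ₂
  exact eigenvalue_normalizedLaplacian_le_of_diag_le hsymm hnonneg hdeg hoff hdiag
    (fun μ w hw hμw => hlmax₁.2 ⟨w, hw, hμw⟩) hv hμ

/-- The largest eigenvalue of the normalized Laplacian is a nonincreasing
function of the self-loop weight `β`: if `0 < β₁ ≤ β₂` then
`λ_max (Λ β₂) ≤ λ_max (Λ β₁)`. The largest eigenvalues are characterized via `IsGreatest`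
over the set of eigenvalues (real eigenvalues with real eigenvectors). -/
theorem normalized_laplacian_top_eigenvalue_antitone_in_beta
    {n : ℕ} (hn : 2 ≤ n)
    (x : Fin n → EuclideanSpace ℝ (Fin 2)) (hx : Function.Injective x)
    (α : ℝ) (hα : α < 0)
    (β₁ β₂ : ℝ) (hβ₁ : 0 < β₁) (hβ₁₂ : β₁ ≤ β₂)
    (ω₁ ω₂ : Fin n → Fin n → ℝ)
    (hω₁ : ∀ i j, i ≠ j → ω₁ i j = ‖x i - x j‖ ^ α)
    (hω₁diag : ∀ i, ω₁ i i = β₁)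
    (hω₂ : ∀ i j, i ≠ j → ω₂ i j = ‖x i - x j‖ ^ α)
    (hω₂diag : ∀ i, ω₂ i i = β₂)
    (d₁ d₂ : Fin n → ℝ)
    (hd₁ : ∀ i, d₁ i = ∑ p, ω₁ i p) (hd₂ : ∀ i, d₂ i = ∑ p, ω₂ i p)
    (Λ₁ Λ₂ : Matrix (Fin n) (Fin n) ℝ)
    (hΛ₁ : Λ₁ = 1 - (Matrix.diagonal fun i => (Real.sqrt (d₁ i))⁻¹) * (Matrix.of ω₁) *
        (Matrix.diagonal fun i => (Real.sqrt (d₁ i))⁻¹))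
    (hΛ₂ : Λ₂ = 1 - (Matrix.diagonal fun i => (Real.sqrt (d₂ i))⁻¹) * (Matrix.of ω₂) *
        (Matrix.diagonal fun i => (Real.sqrt (d₂ i))⁻¹))
    (lmax₁ lmax₂ : ℝ)
    (hlmax₁ : IsGreatest {σ : ℝ | ∃ v : Fin n → ℝ, v ≠ 0 ∧ Λ₁.mulVec v = σ • v} lmax₁)
    (hlmax₂ : IsGreatest {σ : ℝ | ∃ v : Fin n → ℝ, v ≠ 0 ∧ Λ₂.mulVec v = σ • v} lmax₂) :
    lmax₂ ≤ lmax₁ :=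
  normalized_laplacian_top_eigenvalue_antitone_in_beta_general x α β₁ β₂ hβ₁ hβ₁₂ ω₁ ω₂ hω₁ hω₁diag
    hω₂ hω₂diag d₁ d₂ hd₁ hd₂ Λ₁ Λ₂ hΛ₁ hΛ₂ lmax₁ lmax₂ hlmax₁ hlmax₂
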